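/- arXiv:1911.09708 — 3 statements merged into one kernel-verified Lean document; each statement's English description precedes it below -/
import Mathlib

section
/- Let M = (mᵢⱼ) be an n × n real symmetric negative definite matrix with mᵢⱼ ≥ 0 for all i ≠ j, and let x, y ∈ ℝⁿ. If d = x − y ≥ 0 componentwise satisfies (M d)ⱼ' = 0, dⱼ > 0 and mⱼⱼ' > 0 for some indices j, j', then dⱼ' > 0. -/
open Matrix

/-- Let `M` be a real symmetric negative definite matrix with nonnegative
off-diagonal entries. If `d ≥ 0` componentwise, `(M d)ⱼ' = 0`, `dⱼ > 0` and `Mⱼⱼ' > 0`,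
then `dⱼ' > 0`. (Propagation of strict increase of Zariski coefficients along intersecting
components.) -/
theorem stmt_3 {n : ℕ} (M : Matrix (Fin n) (Fin n) ℝ) (hsymm : M.IsSymm)
    (hneg : ∀ x : Fin n → ℝ, x ≠ 0 → x ⬝ᵥ M.mulVec x < 0)
    (hoff : ∀ i j : Fin n, i ≠ j → 0 ≤ M i j)
    (d : Fin n → ℝ) (hd : ∀ i, 0 ≤ d i)
    (j j' : Fin n) (hzero : M.mulVec d j' = 0)
    (hMjj' : 0 < M j j') (hdj : 0 < d j) :
    0 < d j' := by
  by_cases hjj : j = j'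
  · exact hjj ▸ hdj
  · by_contra hle
    push_neg at hle
    have hdj' : d j' = 0 := le_antisymm hle (hd j')
    have hMj'j : 0 < M j' j := by
      have := hsymm.apply j j'
      simpa [this] using hMjj'
    have hpos : 0 < M.mulVec d j' := by
      rw [mulVec, dotProduct]
      apply Finset.sum_pos' _ ⟨j, Finset.mem_univ j, mul_pos hMj'j hdj⟩
      intro i _
      by_cases hij : i = j'
      · simp [hij, hdj']
      · exact mul_nonneg (hoff j' i (fun h => hij h.symm)) (hd i)
    exact absurd hzero (ne_of_gt hpos)
end

section
/- Let M be an n × n real symmetric negative definite matrix with nonnegative off-diagonal entries, and let d ∈ ℝⁿ with d ≥ 0 componentwise. Suppose (M d)ⱼ = 0 for all j in some set J ⊆ {1,…,n}. Then for j, j' ∈ J, if mⱼⱼ' > 0 and dⱼ > 0 then dⱼ' > 0. Consequently, if the graph on J with edges {j,j'} whenever mⱼⱼ' > 0 is connected and dⱼ > 0 for some j ∈ J, then dⱼ' > 0 for all j' ∈ J. -/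
open Matrix

/-- Let `M` be a real symmetric negative definite matrix with nonnegative
off-diagonal entries, and `d ≥ 0` with `(M d)ⱼ = 0` for all `j ∈ J`. Then positivity of
coordinates of `d` propagates along edges of the intersection graph on `J` (edges where
`Mⱼⱼ' > 0`); consequently, if the intersection graph on `J` is connected and `dⱼ > 0` for
some `j ∈ J`, then `dⱼ' > 0` for all `j' ∈ J`. -/
theorem stmt_4 {n : ℕ} (M : Matrix (Fin n) (Fin n) ℝ) (hsymm : M.IsSymm)
    (hneg : ∀ x : Fin n → ℝ, x ≠ 0 → x ⬝ᵥ M.mulVec x < 0)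
    (hoff : ∀ i j : Fin n, i ≠ j → 0 ≤ M i j)
    (d : Fin n → ℝ) (hd : ∀ i, 0 ≤ d i)
    (J : Set (Fin n)) (hzero : ∀ j ∈ J, M.mulVec d j = 0) :
    (∀ j ∈ J, ∀ j' ∈ J, 0 < M j j' → 0 < d j → 0 < d j') ∧
    ((∀ j ∈ J, ∀ j' ∈ J,
        Relation.ReflTransGen (fun a b => a ∈ J ∧ b ∈ J ∧ a ≠ b ∧ 0 < M a b) j j') →
      (∃ j ∈ J, 0 < d j) → ∀ j' ∈ J, 0 < d j') := by
  have key : ∀ j ∈ J, ∀ j' ∈ J, 0 < M j j' → 0 < d j → 0 < d j' := by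
    intro j hj j' hj' hM hdj
    by_contra h
    have hdj' : d j' = 0 := le_antisymm (not_lt.mp h) (hd j')
    rcases eq_or_ne j j' with rfl | hne
    · exact h hdj
    have hsum : ∑ i, M j' i * d i = 0 := by
      have := hzero j' hj'
      simpa [Matrix.mulVec, dotProduct] using this
    have hsum' : ∑ i ∈ Finset.univ.erase j', M j' i * d i = 0 := by
      have := Finset.sum_erase_add Finset.univ (fun i => M j' i * d i)
        (Finset.mem_univ j')
      simp only [hdj', mul_zero, add_zero] at this
      rw [this, hsum]
    have hzeros : ∀ i ∈ Finset.univ.erase j', M j' i * d i = 0 := by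
      refine (Finset.sum_eq_zero_iff_of_nonneg ?_).mp hsum'
      intro i hi
      exact mul_nonneg (hoff j' i (Finset.ne_of_mem_erase hi).symm) (hd i)
    have hjmem : j ∈ Finset.univ.erase j' := Finset.mem_erase.mpr ⟨hne, Finset.mem_univ j⟩
    have hMsym : M j' j = M j j' := by
      have := congrFun (congrFun hsymm.eq j') j
      simpa [Matrix.transpose_apply] using this.symm
    have := hzeros j hjmem
    rw [hMsym] at this
    nlinarith
  refine ⟨key, ?_⟩
  intro hconn ⟨j, hj, hdj⟩ j' hj'
  have prop : ∀ a b : Fin n,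
      Relation.ReflTransGen (fun a b => a ∈ J ∧ b ∈ J ∧ a ≠ b ∧ 0 < M a b) a b →
      0 < d a → 0 < d b := by
    intro a b h
    induction h with
    | refl => exact id
    | tail _ hstep ih =>
      rcases hstep with ⟨ha, hb, _, hM⟩
      exact fun hda => key _ ha _ hb hM (ih hda)
  exact prop j j' (hconn j hj j' hj') hdj
end

section
/- Let M be an n × n real symmetric negative definite matrix with nonnegative off-diagonal entries, let I ⊆ {1, …, n}, and let v ∈ ℝⁿ. Let a ∈ ℝⁿ be the unique solution of M a = v, and let b ∈ ℝ^I be the unique solution of the restricted system (M_{I,I}) b = v_I, where M_{I,I} is the principal submatrix on rows and columns in I and v_I is the restriction of v. If a ≥ 0 componentwise (i.e., a is the Zariski-coefficient vector, with a ≥ 0 and M a = v), then bᵢ ≤ aᵢ for every i ∈ I. -/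
open Matrix

/-- linear-algebra core of Lemma 3.1, "relative-bauer". Let `M` be a real
symmetric negative definite matrix with nonnegative off-diagonal entries, `a ≥ 0` with
`M a = v` (the Zariski coefficient vector), and let `b` solve the principal subsystem on
`I` (i.e. `b` is supported on `I` and `(M b)ᵢ = vᵢ` for `i ∈ I`). Then `bᵢ ≤ aᵢ` for every
`i ∈ I`. -/
theorem stmt_9 {n : ℕ} (M : Matrix (Fin n) (Fin n) ℝ) (hsymm : M.IsSymm)
    (hneg : ∀ x : Fin n → ℝ, x ≠ 0 → x ⬝ᵥ M.mulVec x < 0)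
    (hoff : ∀ i j : Fin n, i ≠ j → 0 ≤ M i j)
    (I : Set (Fin n)) (v a b : Fin n → ℝ)
    (ha : ∀ i, 0 ≤ a i) (hav : M.mulVec a = v)
    (hb0 : ∀ i ∉ I, b i = 0) (hbv : ∀ i ∈ I, M.mulVec b i = v i) :
    ∀ i ∈ I, b i ≤ a i := by
  set c : Fin n → ℝ := b - a with hc
  set x : Fin n → ℝ := fun i => max (c i) 0 with hxdef
  have hxnn : ∀ i, 0 ≤ x i := fun i => le_max_right _ _
  have hmc : M.mulVec c = M.mulVec b - M.mulVec a := by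
    rw [hc, Matrix.mulVec_sub]
  -- x ⬝ M c = 0
  have h1 : x ⬝ᵥ M.mulVec c = 0 := by
    unfold dotProduct
    apply Finset.sum_eq_zero
    intro i _
    by_cases hi : i ∈ I
    · have : M.mulVec c i = 0 := by
        rw [hmc, Pi.sub_apply, hbv i hi, hav]; ring
      simp [this]
    · have hci : c i ≤ 0 := by
        simp only [hc, Pi.sub_apply, hb0 i hi, zero_sub, neg_nonpos]
        exact ha i
      have : x i = 0 := max_eq_right hci
      simp [this]
  -- x ⬝ M (x - c) ≥ 0
  have h2 : 0 ≤ x ⬝ᵥ M.mulVec (x - c) := by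
    rw [dotProduct]
    apply Finset.sum_nonneg
    intro i _
    rw [Matrix.mulVec, dotProduct, Finset.mul_sum]
    apply Finset.sum_nonneg
    intro j _
    by_cases hij : i = j
    · subst hij
      have : x i * ((x - c) i) = 0 := by
        rcases le_or_gt (c i) 0 with h | h
        · have : x i = 0 := max_eq_right h
          simp [this]
        · have : x i = c i := max_eq_left h.le
          simp [Pi.sub_apply, this]
      calc (0:ℝ) = x i * (M i i * ((x - c) i)) + 0 := by
            rw [show x i * (M i i * ((x - c) i)) = M i i * (x i * ((x - c) i)) by ring,
              this]; ring
        _ ≤ x i * (M i i * ((x - c) i)) := by simp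
    · have hxc : 0 ≤ (x - c) j := by
        simp only [Pi.sub_apply, hxdef]
        exact sub_nonneg.mpr (le_max_left _ _)
      exact mul_nonneg (hxnn i) (mul_nonneg (hoff i j hij) hxc)
  -- hence x ⬝ M x ≥ 0, so x = 0
  have h3 : 0 ≤ x ⬝ᵥ M.mulVec x := by
    have : x ⬝ᵥ M.mulVec x = x ⬝ᵥ M.mulVec c + x ⬝ᵥ M.mulVec (x - c) := by
      have h := Matrix.mulVec_sub M x c
      rw [h, dotProduct_sub]; ring
    rw [this, h1, zero_add]; exact h2
  have hx0 : x = 0 := by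
    by_contra hne
    exact absurd h3 (not_le.mpr (hneg x hne))
  intro i hi
  have : max (c i) 0 = 0 := congrFun hx0 i
  have hci : c i ≤ 0 := by
    by_contra h
    push_neg at h
    rw [max_eq_left h.le] at this
    exact absurd this (ne_of_gt h)
  have := hci
  simp only [hc, Pi.sub_apply, sub_nonpos] at this
  exact this
end
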